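/- arXiv:2208.10748 — 17 statements merged into one kernel-verified Lean document; each statement's English description precedes it below -/
import Mathlib

section
/- Let G be a digital topological group (an NP_i-digital topological group for some i ∈ {1,2}). Then for each x ∈ G, the left translation map μ_x : G → G given by μ_x(y) = xy and the right translation map ν_x : G → G given by ν_x(y) = yx are digital isomorphisms of (G,~). -/
/-- A function between digital images is digitally continuous if adjacent points map
to adjacent or equal points. -/
def DigCont {α β : Type*} (adjA : α → α → Prop) (adjB : β → β → Prop) (f : α → β) : Prop :=
  ∀ x y, adjA x y → adjB (f x) (f y) ∨ f x = f y

/-- NP₁ product adjacency: equal in one coordinate and adjacent in the other. -/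
def NP1adj {α β : Type*} (κ : α → α → Prop) (lam : β → β → Prop) :
    α × β → α × β → Prop :=
  fun p q => (p.1 = q.1 ∧ lam p.2 q.2) ∨ (κ p.1 q.1 ∧ p.2 = q.2)

/-- NP₂ product adjacency: distinct, and adjacent-or-equal in each coordinate. -/
def NP2adj {α β : Type*} (κ : α → α → Prop) (lam : β → β → Prop) :
    α × β → α × β → Prop :=
  fun p q => p ≠ q ∧ (κ p.1 q.1 ∨ p.1 = q.1) ∧ (lam p.2 q.2 ∨ p.2 = q.2)

/-- The NP_i product adjacency, i ∈ {1,2}. -/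
def NPadj (i : ℕ) {α β : Type*} (κ : α → α → Prop) (lam : β → β → Prop) :
    α × β → α × β → Prop :=
  if i = 1 then NP1adj κ lam else NP2adj κ lam

/-- An NP_i-digital topological group: a group with an irreflexive symmetric adjacency
such that multiplication is (NP_i, adj)-continuous and inversion is continuous. -/
def IsNPiDTG (i : ℕ) {G : Type*} [Group G] (adj : G → G → Prop) : Prop :=
  Irreflexive adj ∧ Symmetric adj ∧
    DigCont (NPadj i adj adj) adj (fun p : G × G => p.1 * p.2) ∧
    DigCont adj adj (fun x : G => x⁻¹)

/-- A digital topological group: an NP_i-digital topological group for some i ∈ {1,2}. -/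
def IsDTG {G : Type*} [Group G] (adj : G → G → Prop) : Prop :=
  ∃ i ∈ ({1, 2} : Set ℕ), IsNPiDTG i adj

/-- A digital isomorphism of a digital image to itself: a bijection preserving and
reflecting adjacency. -/
def DigIso {α : Type*} (adj : α → α → Prop) (f : α → α) : Prop :=
  Function.Bijective f ∧ ∀ x y, adj x y ↔ adj (f x) (f y)

lemma left_adj {G : Type*} [Group G] (adj : G → G → Prop)
    (hG : IsDTG adj) (x y z : G) (h : adj y z) : adj (x * y) (x * z) := by
  obtain ⟨i, hi, hirr, hsym, hmul, hinv⟩ := hG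
  have hne : y ≠ z := fun e => hirr y (e ▸ h)
  have hnp : NPadj i adj adj (x, y) (x, z) := by
    unfold NPadj NP1adj NP2adj
    split
    · exact Or.inl ⟨rfl, h⟩
    · exact ⟨by simp [Prod.ext_iff, hne], Or.inr rfl, Or.inl h⟩
  rcases hmul (x, y) (x, z) hnp with h' | h'
  · exact h'
  · exact absurd (mul_left_cancel h') hne

lemma right_adj {G : Type*} [Group G] (adj : G → G → Prop)
    (hG : IsDTG adj) (x y z : G) (h : adj y z) : adj (y * x) (z * x) := by
  obtain ⟨i, hi, hirr, hsym, hmul, hinv⟩ := hG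
  have hne : y ≠ z := fun e => hirr y (e ▸ h)
  have hnp : NPadj i adj adj (y, x) (z, x) := by
    unfold NPadj NP1adj NP2adj
    split
    · exact Or.inr ⟨h, rfl⟩
    · exact ⟨by simp [Prod.ext_iff, hne], Or.inl h, Or.inr rfl⟩
  rcases hmul (y, x) (z, x) hnp with h' | h'
  · exact h'
  · exact absurd (mul_right_cancel h') hne

/-- In a digital topological group, each left translation μ_x(y) = xy and
each right translation ν_x(y) = yx is a digital isomorphism of (G, adj). -/
theorem stmt0 {G : Type*} [Group G] [Fintype G] (adj : G → G → Prop)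
    (hG : IsDTG adj) :
    ∀ x : G, DigIso adj (fun y => x * y) ∧ DigIso adj (fun y => y * x) := by
  intro x
  constructor
  · refine ⟨(Equiv.mulLeft x).bijective, fun y z => ⟨left_adj adj hG x y z, fun h => ?_⟩⟩
    have := left_adj adj hG x⁻¹ _ _ h
    simpa using this
  · refine ⟨(Equiv.mulRight x).bijective, fun y z => ⟨right_adj adj hG x y z, fun h => ?_⟩⟩
    have := right_adj adj hG x⁻¹ _ _ h
    simpa using this
end

section
/- Let G be a finite group equipped with an irreflexive symmetric adjacency relation ~, and suppose that for some i ∈ {1,2} the multiplication μ : G × G → G, μ(x,y) = xy, is continuous from the NP_i adjacency to ~. Then the inversion map x ↦ x⁻¹ is digitally continuous; consequently G is an NP_i-digital topological group. -/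
/-- If the multiplication is NP_i-continuous (i ∈ {1,2}) then the inversion
is automatically continuous, so G is an NP_i-digital topological group. -/
theorem stmt1 {G : Type*} [Group G] [Fintype G] (adj : G → G → Prop)
    (hirr : Irreflexive adj) (hsym : Symmetric adj)
    (i : ℕ) (hi : i ∈ ({1, 2} : Set ℕ))
    (hmul : DigCont (NPadj i adj adj) adj (fun p : G × G => p.1 * p.2)) :
    DigCont adj adj (fun x : G => x⁻¹) ∧ IsNPiDTG i adj := by
  have hne : ∀ x y : G, adj x y → x ≠ y := by
    rintro x y h rfl; exact hirr x h
  have key : ∀ a x y : G, adj x y → adj (a * x) (a * y) := by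
    intro a x y h
    have hxy := hne x y h
    have hnp : NPadj i adj adj (a, x) (a, y) := by
      rcases hi with rfl | rfl
      · exact Or.inl ⟨rfl, h⟩
      · exact ⟨by simpa using hxy, Or.inr rfl, Or.inl h⟩
    rcases hmul _ _ hnp with h' | h'
    · exact h'
    · exact absurd (mul_left_cancel h') hxy
  have keyr : ∀ a x y : G, adj x y → adj (x * a) (y * a) := by
    intro a x y h
    have hxy := hne x y h
    have hnp : NPadj i adj adj (x, a) (y, a) := by
      rcases hi with rfl | rfl
      · exact Or.inr ⟨h, rfl⟩
      · exact ⟨by simpa using hxy, Or.inl h, Or.inr rfl⟩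
    rcases hmul _ _ hnp with h' | h'
    · exact h'
    · exact absurd (mul_right_cancel h') hxy
  have hinv : DigCont adj adj (fun x : G => x⁻¹) := by
    intro x y h
    left
    have h1 : adj (x⁻¹ * x * y⁻¹) (x⁻¹ * y * y⁻¹) := keyr _ _ _ (key x⁻¹ _ _ h)
    simp only [inv_mul_cancel, one_mul, mul_inv_cancel_right] at h1
    exact hsym h1
  exact ⟨hinv, hirr, hsym, hmul, hinv⟩
end

section
/- Let G be a finite group equipped with an irreflexive symmetric adjacency relation ~. Assume that for each x ∈ G the left translation μ_x(y) = xy and the right translation ν_x(y) = yx are digital isomorphisms of (G,~). Then G is an NP₁-digital topological group: the multiplication μ(x,y) = xy is continuous from the NP₁ adjacency to ~, and the inversion x ↦ x⁻¹ is digitally continuous. -/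
/-- If all left and right translations are digital isomorphisms, then G is
an NP₁-digital topological group. -/
theorem stmt2 {G : Type*} [Group G] [Fintype G] (adj : G → G → Prop)
    (hirr : Irreflexive adj) (hsym : Symmetric adj)
    (h : ∀ x : G, DigIso adj (fun y => x * y) ∧ DigIso adj (fun y => y * x)) :
    IsNPiDTG 1 adj := by
  refine ⟨hirr, hsym, ?_, ?_⟩
  · intro p q hpq
    simp only [NPadj, if_pos rfl, NP1adj] at hpq
    rcases hpq with ⟨h1, h2⟩ | ⟨h1, h2⟩
    · left; show adj (p.1 * p.2) (q.1 * q.2); rw [h1]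
      exact ((h q.1).1.2 p.2 q.2).mp h2
    · left; show adj (p.1 * p.2) (q.1 * q.2); rw [h2]
      exact ((h q.2).2.2 p.1 q.1).mp h1
  · intro x y hxy
    left
    have h1 : adj 1 (x⁻¹ * y) := by
      have := ((h x⁻¹).1.2 x y).mp hxy
      simpa using this
    have h2 : adj (1 * y⁻¹) (x⁻¹ * y * y⁻¹) := ((h y⁻¹).2.2 1 (x⁻¹ * y)).mp h1
    have : adj y⁻¹ x⁻¹ := by simpa [mul_assoc] using h2
    exact hsym this
end

section
/- Let G be a finite group equipped with an irreflexive symmetric adjacency relation ~. Assume that for each x ∈ G the left translation μ_x(y) = xy and the right translation ν_x(y) = yx are digitally continuous maps from (G,~) to (G,~). Then G is an NP₁-digital topological group: the multiplication μ(x,y) = xy is continuous from the NP₁ adjacency to ~, and the inversion x ↦ x⁻¹ is digitally continuous. -/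
/-- If all left and right translations are digitally continuous, then G is
an NP₁-digital topological group. -/
theorem stmt3 {G : Type*} [Group G] [Fintype G] (adj : G → G → Prop)
    (hirr : Irreflexive adj) (hsym : Symmetric adj)
    (h : ∀ x : G, DigCont adj adj (fun y => x * y) ∧ DigCont adj adj (fun y => y * x)) :
    IsNPiDTG 1 adj := by
  refine ⟨hirr, hsym, ?_, ?_⟩
  · intro p q hpq
    simp only [NPadj, if_pos rfl, NP1adj] at hpq
    rcases hpq with ⟨h1, h2⟩ | ⟨h1, h2⟩
    · simp only []; rw [← h1]; exact (h p.1).1 p.2 q.2 h2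
    · simp only []; rw [← h2]; exact (h p.2).2 p.1 q.1 h1
  · intro x y hxy
    rcases (h x⁻¹).1 x y hxy with h1 | h1
    · simp only [inv_mul_cancel] at h1
      rcases (h y⁻¹).2 1 (x⁻¹ * y) h1 with h2 | h2
      · simp only [one_mul, mul_assoc, mul_inv_cancel, mul_one] at h2
        exact Or.inl (hsym h2)
      · simp only [one_mul, mul_assoc, mul_inv_cancel, mul_one] at h2
        exact Or.inr h2.symm
    · simp only [inv_mul_cancel] at h1
      right
      have : x = y := by
        have := h1.symm
        rw [mul_eq_one_iff_inv_eq, inv_inv] at this; exact this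
      rw [this]
end

section
/- Let G be a digital topological group (an NP_i-digital topological group for some i ∈ {1,2}). Then the graph (G,~) is vertex-transitive: for all x, y ∈ G there exists a graph automorphism f of (G,~) (a bijection f : G → G such that a ~ b if and only if f(a) ~ f(b)) with f(x) = y. -/
lemma dtg_mul_left {G : Type*} [Group G] (adj : G → G → Prop)
    (hG : IsDTG adj) (g a b : G) (hab : adj a b) : adj (g * a) (g * b) := by
  obtain ⟨i, hi, hirr, hsym, hmul, hinv⟩ := hG
  have hne : a ≠ b := fun h => hirr a (h ▸ hab)
  have key : adj (g * a) (g * b) ∨ g * a = g * b := by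
    rcases hi with hi | hi
    · subst hi
      exact hmul (g, a) (g, b) (by simp [NPadj, NP1adj]; exact Or.inl hab)
    · simp only [Set.mem_singleton_iff] at hi; subst hi
      refine hmul (g, a) (g, b) ?_
      simp [NPadj, NP2adj]
      exact ⟨hne, Or.inl hab⟩
  rcases key with h | h
  · exact h
  · exact absurd (mul_left_cancel h) hne

/-- A digital topological group is vertex-transitive: for all x, y there is
a graph automorphism carrying x to y. -/
theorem stmt4 {G : Type*} [Group G] [Fintype G] (adj : G → G → Prop)
    (hG : IsDTG adj) :
    ∀ x y : G, ∃ f : G → G, Function.Bijective f ∧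
      (∀ a b : G, adj a b ↔ adj (f a) (f b)) ∧ f x = y := by
  intro x y
  refine ⟨fun a => y * x⁻¹ * a, (Group.mulLeft_bijective _), fun a b => ?_, by group⟩
  constructor
  · exact dtg_mul_left adj hG _ a b
  · intro h
    have e : ∀ c : G, (y * x⁻¹)⁻¹ * (y * x⁻¹ * c) = c := fun c => by group
    have := dtg_mul_left adj hG (y * x⁻¹)⁻¹ _ _ h
    rwa [e, e] at this
end

section
/- Let G be a finite subset of ℤ² equipped with the c₁-adjacency, and suppose G carries a group structure making it a digital topological group, and that the graph (G, c₁) is connected. Then either G has at most 2 points, or G is a digital simple closed curve: G = {x₀, x₁, …, x_{n−1}} for some n ≥ 3 with the x_i distinct and x_i c₁-adjacent to x_j if and only if j ≡ i ± 1 (mod n). -/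
/-- c₁-adjacency in ℤ²: distinct points at L¹-distance 1. -/
def c1 (x y : ℤ × ℤ) : Prop := |x.1 - y.1| + |x.2 - y.2| = 1

/-!
Multiplication is continuous in its second argument, so together with cancellation every left
translation `g * ·` preserves c₁-adjacency; hence every point has as many neighbours as the
identity. The lexicographically largest point of `G` can only have neighbours to its left and
below, so all points have the same number `d ≤ 2` of neighbours. A connected graph in which every
vertex has at most one neighbour has at most two vertices, and a finite connected graph in which
every vertex has exactly two neighbours is a cycle.
-/

namespace SimpleGraph

variable {V : Type*} {Γ : SimpleGraph V}

theorem Connected.card_le_two_of_ncard_neighborSet_le_one [Finite V] (hconn : Γ.Connected)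
    (hdeg : ∀ v, (Γ.neighborSet v).ncard ≤ 1) : Nat.card V ≤ 2 := by
  have hunique : ∀ {u a b}, Γ.Adj u a → Γ.Adj u b → a = b := fun ha hb =>
    (Set.ncard_le_one_iff).1 (hdeg _) ha hb
  obtain ⟨v⟩ := hconn.nonempty
  have hclosed : ∀ w, Relation.ReflTransGen Γ.Adj v w → w ∈ insert v (Γ.neighborSet v) := by
    intro w hw
    induction hw with
    | refl => exact Set.mem_insert v _
    | tail _ hbc ih =>
      rcases ih with rfl | hvb
      · exact Or.inr hbc
      · exact Or.inl (hunique hvb.symm hbc).symm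
  calc Nat.card V = (Set.univ : Set V).ncard := (Set.ncard_univ V).symm
    _ ≤ (insert v (Γ.neighborSet v)).ncard := Set.ncard_le_ncard fun w _ =>
        hclosed w ((reachable_iff_reflTransGen v w).1 (hconn v w))
    _ ≤ 2 := (Set.ncard_insert_le _ _).trans (by have := hdeg v; omega)

theorem Connected.exists_isCycle_forall_mem_support [Finite V] (hconn : Γ.Connected)
    (hdeg : ∀ v, (Γ.neighborSet v).ncard = 2) :
    ∃ (u : V) (p : Γ.Walk u u), p.IsCycle ∧ ∀ w, w ∈ p.support := by
  obtain ⟨u⟩ := hconn.nonempty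
  obtain ⟨p, hp, hverts⟩ := IsCycles.exists_cycle_toSubgraph_verts_eq_connectedComponentSupp
    (c := Γ.connectedComponentMk u) (fun v _ => hdeg v) rfl
    (Set.nonempty_of_ncard_ne_zero (by simp [hdeg]))
  refine ⟨u, p, hp, fun w => ?_⟩
  rw [← Walk.mem_verts_toSubgraph, hverts, ConnectedComponent.mem_supp_iff]
  exact ConnectedComponent.eq.2 (hconn w u)

namespace Walk

variable {u : V} {p : Γ.Walk u u}

theorem getVert_mod_length (p : Γ.Walk u u) {k : ℕ} (hk : k ≤ p.length) :
    p.getVert (k % p.length) = p.getVert k := by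
  rcases hk.lt_or_eq with hk | rfl
  · rw [Nat.mod_eq_of_lt hk]
  · rw [Nat.mod_self, getVert_zero, getVert_length]

theorem IsCycle.neZero_length (hp : p.IsCycle) : NeZero p.length :=
  ⟨by have := hp.three_le_length; omega⟩

def cycleVert (p : Γ.Walk u u) (i : ZMod p.length) : V := p.getVert i.val

theorem IsCycle.adj_cycleVert_add_one (hp : p.IsCycle) (i : ZMod p.length) :
    Γ.Adj (p.cycleVert i) (p.cycleVert (i + 1)) := by
  have := hp.neZero_length
  have hi := ZMod.val_lt i
  rw [cycleVert, cycleVert, ZMod.val_add, ZMod.val_one_eq_one_mod, Nat.add_mod_mod,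
    p.getVert_mod_length hi]
  exact p.adj_getVert_succ hi

theorem IsCycle.cycleVert_injective (hp : p.IsCycle) : Function.Injective p.cycleVert := by
  have := hp.neZero_length
  intro i j hij
  have hlt : ∀ k : ZMod p.length, k.val ≤ p.length - 1 := fun k => by
    have := ZMod.val_lt k; omega
  exact ZMod.val_injective _ (hp.getVert_injOn' (hlt i) (hlt j) hij)

theorem cycleVert_surjective (hsupp : ∀ w, w ∈ p.support) :
    Function.Surjective p.cycleVert := by
  intro w
  obtain ⟨k, rfl, hk⟩ := mem_support_iff_exists_getVert.1 (hsupp w)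
  exact ⟨k, by rw [cycleVert, ZMod.val_natCast, p.getVert_mod_length hk]⟩

theorem IsCycle.adj_cycleVert_iff (hp : p.IsCycle) (hdeg : ∀ v, (Γ.neighborSet v).ncard = 2)
    (i j : ZMod p.length) :
    Γ.Adj (p.cycleVert i) (p.cycleVert j) ↔ j = i + 1 ∨ j = i - 1 := by
  have hlen := hp.three_le_length
  have hinj := hp.cycleVert_injective
  have hsucc := hp.adj_cycleVert_add_one i
  have hpred : Γ.Adj (p.cycleVert i) (p.cycleVert (i - 1)) := by
    simpa using (hp.adj_cycleVert_add_one (i - 1)).symm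
  have hne : i + 1 ≠ i - 1 := fun h => by
    have h2 : ((2 : ℕ) : ZMod p.length) = 0 := by push_cast; linear_combination h
    have := Nat.le_of_dvd two_pos ((ZMod.natCast_eq_zero_iff 2 _).1 h2)
    omega
  have hsub : {p.cycleVert (i + 1), p.cycleVert (i - 1)} ⊆ Γ.neighborSet (p.cycleVert i) :=
    Set.pair_subset hsucc hpred
  have hnbrs := Set.eq_of_subset_of_ncard_le hsub (by rw [hdeg, Set.ncard_pair (hinj.ne hne)])
    (Set.finite_of_ncard_ne_zero (by rw [hdeg]; omega))
  constructor
  · intro hij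
    have hj : p.cycleVert j ∈ Γ.neighborSet (p.cycleVert i) := hij
    rw [← hnbrs] at hj
    exact hj.imp (fun h => hinj h) (fun h => hinj h)
  · rintro (rfl | rfl)
    · exact hsucc
    · exact hpred

end Walk

theorem Connected.exists_bijective_zmod_of_ncard_neighborSet_eq_two [Finite V]
    (hconn : Γ.Connected) (hdeg : ∀ v, (Γ.neighborSet v).ncard = 2) :
    ∃ n : ℕ, 3 ≤ n ∧ ∃ x : ZMod n → V, Function.Bijective x ∧
      ∀ i j : ZMod n, Γ.Adj (x i) (x j) ↔ (j = i + 1 ∨ j = i - 1) := by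
  obtain ⟨u, p, hp, hsupp⟩ := hconn.exists_isCycle_forall_mem_support hdeg
  exact ⟨p.length, hp.three_le_length, p.cycleVert,
    ⟨hp.cycleVert_injective, Walk.cycleVert_surjective hsupp⟩, hp.adj_cycleVert_iff hdeg⟩

end SimpleGraph

open SimpleGraph

theorem SimpleGraph.ncard_neighborSet_eq_of_adj_mul_left {G : Type*} [Group G] {Γ : SimpleGraph G}
    (hmul : ∀ g {a b : G}, Γ.Adj a b → Γ.Adj (g * a) (g * b)) (v : G) :
    (Γ.neighborSet v).ncard = (Γ.neighborSet 1).ncard := by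
  have hnbrs : Γ.neighborSet v = (v * ·) '' Γ.neighborSet 1 := by
    ext w
    refine ⟨fun hw => ⟨v⁻¹ * w, ?_, mul_inv_cancel_left v w⟩, ?_⟩
    · simpa using hmul v⁻¹ hw
    · rintro ⟨w, hw, rfl⟩
      simpa using hmul v hw
  rw [hnbrs, Set.ncard_image_of_injective _ (mul_right_injective v)]

theorem IsDTG.adj_mul_left {G : Type*} [Group G] {adj : G → G → Prop} (h : IsDTG adj)
    (g : G) {a b : G} (hab : adj a b) : adj (g * a) (g * b) := by
  obtain ⟨i, hi, hirr, -, hmul, -⟩ := h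
  have hne : a ≠ b := by rintro rfl; exact hirr a hab
  have hprod : NPadj i adj adj (g, a) (g, b) := by
    rcases hi with rfl | rfl
    · exact Or.inl ⟨rfl, hab⟩
    · exact ⟨by simpa using hne, Or.inr rfl, Or.inl hab⟩
  exact (hmul _ _ hprod).resolve_right fun h => hne (mul_left_cancel h)

theorem c1_symm {x y : ℤ × ℤ} (h : c1 x y) : c1 y x := by
  rw [c1, abs_sub_comm y.1, abs_sub_comm y.2]
  exact h

theorem c1_irrefl (x : ℤ × ℤ) : ¬ c1 x x := by
  simp [c1]

def c1Graph (S : Set (ℤ × ℤ)) : SimpleGraph S where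
  Adj a b := c1 a b
  symm := ⟨fun _ _ => c1_symm⟩
  loopless := ⟨fun a => c1_irrefl a⟩

theorem eq_of_c1_of_toLex_le {x y : ℤ × ℤ} (h : c1 x y) (hle : toLex y ≤ toLex x) :
    y = (x.1 - 1, x.2) ∨ y = (x.1, x.2 - 1) := by
  rw [Prod.Lex.le_iff] at hle
  unfold c1 at h
  obtain ⟨x1, x2⟩ := x
  obtain ⟨y1, y2⟩ := y
  simp only [ofLex_toLex, Prod.mk.injEq] at hle h ⊢
  rcases abs_cases (x1 - y1) with ⟨e1, _⟩ | ⟨e1, _⟩ <;>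
    rcases abs_cases (x2 - y2) with ⟨e2, _⟩ | ⟨e2, _⟩ <;> omega

theorem exists_ncard_neighborSet_c1Graph_le_two {S : Set (ℤ × ℤ)} (hfin : S.Finite)
    (hne : S.Nonempty) : ∃ p : S, ((c1Graph S).neighborSet p).ncard ≤ 2 := by
  obtain ⟨x, hx, hmax⟩ := S.exists_max_image toLex hfin hne
  refine ⟨⟨x, hx⟩, ?_⟩
  calc ((c1Graph S).neighborSet ⟨x, hx⟩).ncard
        ≤ ({(x.1 - 1, x.2), (x.1, x.2 - 1)} : Set (ℤ × ℤ)).ncard :=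
        Set.ncard_le_ncard_of_injOn Subtype.val
          (fun y hy => eq_of_c1_of_toLex_le hy (hmax y y.2)) Subtype.val_injective.injOn
    _ ≤ 2 := (Set.ncard_insert_le _ _).trans (by rw [Set.ncard_singleton])

/-- A connected digital topological group in (ℤ², c₁) has at most 2 points
or is a digital simple closed curve. -/
theorem stmt5 (G : Set (ℤ × ℤ)) [Fintype G] [Group G]
    (hG : IsDTG (fun a b : G => c1 a.val b.val))
    (hconn : ∀ a b : G, Relation.ReflTransGen (fun a b : G => c1 a.val b.val) a b) :
    Fintype.card G ≤ 2 ∨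
      ∃ n : ℕ, 3 ≤ n ∧ ∃ x : ZMod n → G, Function.Bijective x ∧
        ∀ i j : ZMod n, c1 (x i).val (x j).val ↔ (j = i + 1 ∨ j = i - 1) := by
  have hΓ : (c1Graph G).Connected :=
    { preconnected := fun a b => (reachable_iff_reflTransGen a b).2 (hconn a b)
      nonempty := ⟨1⟩ }
  have hreg := ncard_neighborSet_eq_of_adj_mul_left (Γ := c1Graph G) hG.adj_mul_left
  obtain ⟨p, hp⟩ := exists_ncard_neighborSet_c1Graph_le_two (Set.toFinite G) ⟨_, (1 : G).2⟩
  by_cases h2 : ((c1Graph G).neighborSet 1).ncard = 2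
  · exact Or.inr (hΓ.exists_bijective_zmod_of_ncard_neighborSet_eq_two fun v => (hreg v).trans h2)
  · left
    rw [← Nat.card_eq_fintype_card]
    refine hΓ.card_le_two_of_ncard_neighborSet_le_one fun v => ?_
    rw [hreg] at hp ⊢
    omega
end

section
/- Fix i ∈ {1,2} and let (G,κ) and (H,λ) be NP_i-digital topological groups. Then the direct product group G × H, equipped with the adjacency NP_i(κ,λ) on G × H, is an NP_i-digital topological group (with coordinatewise multiplication (g,h)(g',h') = (gg', hh') and inverse (g,h)⁻¹ = (g⁻¹, h⁻¹)). -/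
lemma np2_mul_step {G : Type*} [Group G] {κ : G → G → Prop}
    (hm : DigCont (NP2adj κ κ) κ (fun p : G × G => p.1 * p.2))
    {a a' c c' : G} (h1 : κ a a' ∨ a = a') (h2 : κ c c' ∨ c = c') :
    κ (a * c) (a' * c') ∨ a * c = a' * c' := by
  by_cases he : a = a' ∧ c = c'
  · exact Or.inr (by rw [he.1, he.2])
  · exact hm (a, c) (a', c') ⟨by simp only [ne_eq, Prod.mk.injEq]; tauto, h1, h2⟩

/-- The direct product of two NP_i-digital topological groups, with the
NP_i(κ,λ) adjacency, is an NP_i-digital topological group. -/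
theorem stmt6 {G H : Type*} [Group G] [Group H] [Fintype G] [Fintype H]
    (i : ℕ) (hi : i ∈ ({1, 2} : Set ℕ))
    (κ : G → G → Prop) (lam : H → H → Prop)
    (hG : IsNPiDTG i κ) (hH : IsNPiDTG i lam) :
    IsNPiDTG i (NPadj i κ lam) := by
  obtain ⟨hGi, hGs, hGm, hGv⟩ := hG
  obtain ⟨hHi, hHs, hHm, hHv⟩ := hH
  simp only [Set.mem_insert_iff, Set.mem_singleton_iff] at hi
  rcases hi with rfl | rfl
  · -- i = 1
    simp only [IsNPiDTG, NPadj, if_pos rfl] at hGm hHm ⊢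
    refine ⟨?_, ?_, ?_, ?_⟩
    · rintro ⟨a, b⟩ (⟨-, h⟩ | ⟨h, -⟩)
      exacts [hHi _ h, hGi _ h]
    · rintro ⟨a, b⟩ ⟨a', b'⟩ (⟨he, h⟩ | ⟨h, he⟩)
      · exact Or.inl ⟨he.symm, hHs h⟩
      · exact Or.inr ⟨hGs h, he.symm⟩
    · rintro ⟨⟨a, b⟩, c, d⟩ ⟨⟨a', b'⟩, c', d'⟩ (⟨he, hcd⟩ | ⟨hab, he⟩)
      · rw [Prod.mk.injEq] at he
        obtain ⟨rfl, rfl⟩ := he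
        simp only [Prod.mk_mul_mk]
        rcases hcd with ⟨rfl, hd⟩ | ⟨hc, rfl⟩
        · rcases hHm (b, d) (b, d') (Or.inl ⟨rfl, hd⟩) with h | h
          · exact Or.inl (Or.inl ⟨rfl, h⟩)
          · exact Or.inr (by beta_reduce at h; rw [h])
        · rcases hGm (a, c) (a, c') (Or.inl ⟨rfl, hc⟩) with h | h
          · exact Or.inl (Or.inr ⟨h, rfl⟩)
          · exact Or.inr (by beta_reduce at h; rw [h])
      · rw [Prod.mk.injEq] at he
        obtain ⟨rfl, rfl⟩ := he
        simp only [Prod.mk_mul_mk]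
        rcases hab with ⟨rfl, hb⟩ | ⟨ha, rfl⟩
        · rcases hHm (b, d) (b', d) (Or.inr ⟨hb, rfl⟩) with h | h
          · exact Or.inl (Or.inl ⟨rfl, h⟩)
          · exact Or.inr (by beta_reduce at h; rw [h])
        · rcases hGm (a, c) (a', c) (Or.inr ⟨ha, rfl⟩) with h | h
          · exact Or.inl (Or.inr ⟨h, rfl⟩)
          · exact Or.inr (by beta_reduce at h; rw [h])
    · rintro ⟨a, b⟩ ⟨a', b'⟩ (⟨rfl, hb⟩ | ⟨ha, rfl⟩)
      · simp only [Prod.inv_mk]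
        rcases hHv b b' hb with h | h
        · exact Or.inl (Or.inl ⟨rfl, h⟩)
        · exact Or.inr (by beta_reduce at h; rw [h])
      · simp only [Prod.inv_mk]
        rcases hGv a a' ha with h | h
        · exact Or.inl (Or.inr ⟨h, rfl⟩)
        · exact Or.inr (by beta_reduce at h; rw [h])
  · -- i = 2
    simp only [IsNPiDTG, NPadj, if_neg (by norm_num : (2:ℕ) ≠ 1)] at hGm hHm ⊢
    refine ⟨?_, ?_, ?_, ?_⟩
    · rintro p ⟨hne, -⟩
      exact hne rfl
    · rintro p q ⟨hne, h1, h2⟩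
      refine ⟨hne.symm, ?_, ?_⟩
      · rcases h1 with h | h
        exacts [Or.inl (hGs h), Or.inr h.symm]
      · rcases h2 with h | h
        exacts [Or.inl (hHs h), Or.inr h.symm]
    · rintro ⟨⟨a, b⟩, c, d⟩ ⟨⟨a', b'⟩, c', d'⟩ ⟨hne, h1, h2⟩
      have haa : κ a a' ∨ a = a' := by
        rcases h1 with ⟨-, h, -⟩ | he
        · exact h
        · exact Or.inr (congrArg Prod.fst he)
      have hbb : lam b b' ∨ b = b' := by
        rcases h1 with ⟨-, -, h⟩ | he
        · exact h
        · exact Or.inr (congrArg Prod.snd he)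
      have hcc : κ c c' ∨ c = c' := by
        rcases h2 with ⟨-, h, -⟩ | he
        · exact h
        · exact Or.inr (congrArg Prod.fst he)
      have hdd : lam d d' ∨ d = d' := by
        rcases h2 with ⟨-, -, h⟩ | he
        · exact h
        · exact Or.inr (congrArg Prod.snd he)
      have hg := np2_mul_step hGm haa hcc
      have hh := np2_mul_step hHm hbb hdd
      simp only [Prod.mk_mul_mk]
      by_cases heq : (a * c, b * d) = (a' * c', b' * d')
      · exact Or.inr heq
      · exact Or.inl ⟨heq, hg, hh⟩
    · rintro ⟨a, b⟩ ⟨a', b'⟩ ⟨hne, h1, h2⟩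
      simp only [Prod.inv_mk]
      have hg : κ a⁻¹ a'⁻¹ ∨ a⁻¹ = a'⁻¹ := by
        rcases h1 with h | rfl
        · exact hGv a a' h
        · exact Or.inr rfl
      have hh : lam b⁻¹ b'⁻¹ ∨ b⁻¹ = b'⁻¹ := by
        rcases h2 with h | rfl
        · exact hHv b b' h
        · exact Or.inr rfl
      by_cases heq : ((a⁻¹, b⁻¹) : G × H) = (a'⁻¹, b'⁻¹)
      · exact Or.inr heq
      · exact Or.inl ⟨heq, hg, hh⟩
end

section
/- Let G be a finite group and S ⊆ G a symmetric generating set (g ∈ S implies g⁻¹ ∈ S) with e ∉ S, equipped with the Cayley graph adjacency: x ~ y iff y = gx for some g ∈ S. Suppose there exists a generator x ∈ S such that x² ∉ S and x² ≠ e. Then the multiplication μ(x,y) = xy is not continuous from the NP₂ adjacency to ~; in particular, G with this adjacency is not an NP₂-digital topological group. -/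
/-- If some generator x ∈ S has x² ∉ S and x² ≠ e, then the Cayley graph
multiplication is not NP₂-continuous, so G is not an NP₂-digital topological group. -/
theorem stmt8 {G : Type*} [Group G] [Fintype G] (S : Set G)
    (hsymm : ∀ g ∈ S, g⁻¹ ∈ S) (hgen : Subgroup.closure S = ⊤) (he : (1 : G) ∉ S)
    (x : G) (hx : x ∈ S) (hx2 : x ^ 2 ∉ S) (hx2e : x ^ 2 ≠ 1) :
    ¬ DigCont
        (NPadj 2 (fun a b : G => ∃ g ∈ S, b = g * a) (fun a b : G => ∃ g ∈ S, b = g * a))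
        (fun a b : G => ∃ g ∈ S, b = g * a) (fun p : G × G => p.1 * p.2) ∧
      ¬ IsNPiDTG 2 (fun a b : G => ∃ g ∈ S, b = g * a) := by
  have hxne : x ≠ 1 := by rintro rfl; exact he hx
  have hmain : ¬ DigCont
      (NPadj 2 (fun a b : G => ∃ g ∈ S, b = g * a) (fun a b : G => ∃ g ∈ S, b = g * a))
      (fun a b : G => ∃ g ∈ S, b = g * a) (fun p : G × G => p.1 * p.2) := by
    intro hc
    have hadj : NPadj 2 (fun a b : G => ∃ g ∈ S, b = g * a)
        (fun a b : G => ∃ g ∈ S, b = g * a) ((1 : G), (1 : G)) (x, x) := by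
      simp only [NPadj, NP2adj, if_neg (by norm_num : (2:ℕ) ≠ 1)]
      refine ⟨by simp [Prod.ext_iff, hxne.symm], ?_, ?_⟩ <;>
        exact Or.inl ⟨x, hx, by simp⟩
    have := hc _ _ hadj
    simp only at this
    rcases this with ⟨g, hg, hgeq⟩ | heq
    · apply hx2
      have : g = x * x := by simpa using hgeq.symm
      rw [this] at hg; simpa [pow_two] using hg
    · exact hx2e (by simpa [pow_two] using heq.symm)
  exact ⟨hmain, fun h => hmain h.2.2.1⟩
end

section
/- Let G be a digital topological group with identity element e, and let G_e denote the connected component of e in the graph (G,~), i.e., G_e = {x ∈ G : there is a path of adjacent vertices from e to x}. Then G_e is a normal subgroup of G. -/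
/-- The identity component of a digital topological group is a normal
subgroup. -/
theorem stmt10 {G : Type*} [Group G] [Fintype G] (adj : G → G → Prop)
    (hG : IsDTG adj) :
    ∃ N : Subgroup G, N.Normal ∧ (N : Set G) = {x | Relation.ReflTransGen adj 1 x} := by

  obtain ⟨i, _, hirr, hsym, hmul, hinv⟩ := hG
  have hne : ∀ x y : G, adj x y → x ≠ y := fun x y h hxy => hirr x (hxy ▸ h)
  have hL : ∀ a x y : G, adj x y → adj (a * x) (a * y) := by
    intro a x y h
    have hadj : NPadj i adj adj (a, x) (a, y) := by
      unfold NPadj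
      split
      · exact Or.inl ⟨rfl, h⟩
      · exact ⟨by simp [Prod.ext_iff, hne x y h], Or.inr rfl, Or.inl h⟩
    rcases hmul (a, x) (a, y) hadj with h' | h'
    · exact h'
    · exact absurd (mul_left_cancel h') (hne x y h)
  have hR : ∀ a x y : G, adj x y → adj (x * a) (y * a) := by
    intro a x y h
    have hadj : NPadj i adj adj (x, a) (y, a) := by
      unfold NPadj
      split
      · exact Or.inr ⟨h, rfl⟩
      · exact ⟨by simp [Prod.ext_iff, hne x y h], Or.inl h, Or.inr rfl⟩
    rcases hmul (x, a) (y, a) hadj with h' | h'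
    · exact h'
    · exact absurd (mul_right_cancel h') (hne x y h)
  have hI : ∀ x y : G, adj x y → adj x⁻¹ y⁻¹ := by
    intro x y h
    rcases hinv x y h with h' | h'
    · exact h'
    · exact absurd (inv_injective h') (hne x y h)
  have key : ∀ (f : G → G), (∀ x y, adj x y → adj (f x) (f y)) →
      ∀ x y, Relation.ReflTransGen adj x y → Relation.ReflTransGen adj (f x) (f y) := by
    intro f hf x y h
    induction h with
    | refl => exact .refl
    | tail _ hab ih => exact ih.tail (hf _ _ hab)
  refine ⟨{ carrier := {x | Relation.ReflTransGen adj 1 x}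
            one_mem' := .refl
            mul_mem' := ?_
            inv_mem' := ?_ }, ?_, rfl⟩
  · intro a b ha hb
    exact ha.trans (by simpa using key (fun z => a * z) (hL a) 1 b hb)
  · intro a ha
    simpa using key (fun z => z⁻¹) hI 1 a ha
  · constructor
    intro n hn g
    simpa using key (fun z => g * z * g⁻¹)
      (fun x y h => hR g⁻¹ _ _ (hL g x y h)) 1 n hn
end

section
/- Let G be a digital topological group. Then graph reachability is a group congruence on G: if x and x' lie in the same connected component of (G,~) and y and y' lie in the same connected component, then xy and x'y' lie in the same connected component; moreover x⁻¹ and x'⁻¹ lie in the same connected component. Consequently the set C_G of connected components of G forms a group under the well-defined operations G_x · G_y = G_{xy} and (G_x)⁻¹ = G_{x⁻¹}. -/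
/-- Reachability is a group congruence on a digital topological group, so
the set of connected components forms a group with G_x · G_y = G_{xy}, (G_x)⁻¹ = G_{x⁻¹}. -/
theorem stmt11 {G : Type*} [Group G] [Fintype G] (adj : G → G → Prop)
    (hG : IsDTG adj) :
    (∀ x x' y y' : G, Relation.ReflTransGen adj x x' → Relation.ReflTransGen adj y y' →
        Relation.ReflTransGen adj (x * y) (x' * y')) ∧
    (∀ x x' : G, Relation.ReflTransGen adj x x' →
        Relation.ReflTransGen adj x⁻¹ x'⁻¹) ∧
    ∃ (m : Quot (Relation.ReflTransGen adj) → Quot (Relation.ReflTransGen adj) →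
          Quot (Relation.ReflTransGen adj))
      (inv : Quot (Relation.ReflTransGen adj) → Quot (Relation.ReflTransGen adj))
      (e : Quot (Relation.ReflTransGen adj)),
      (∀ a b c, m (m a b) c = m a (m b c)) ∧
      (∀ a, m e a = a) ∧ (∀ a, m a e = a) ∧
      (∀ a, m (inv a) a = e) ∧
      (∀ x y : G, m (Quot.mk (Relation.ReflTransGen adj) x)
          (Quot.mk (Relation.ReflTransGen adj) y) = Quot.mk (Relation.ReflTransGen adj) (x * y)) ∧
      (∀ x : G, inv (Quot.mk (Relation.ReflTransGen adj) x)
          = Quot.mk (Relation.ReflTransGen adj) x⁻¹) := by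
  obtain ⟨i, hi, hirr, hsym, hmul, hinv⟩ := hG
  -- one-step lemmas
  have hnp : ∀ x x' y : G, adj x x' → NPadj i adj adj (x, y) (x', y) := by
    intro x x' y h
    rcases hi with rfl | rfl
    · exact Or.inr ⟨h, rfl⟩
    · refine ⟨fun hc => hirr x (by cases hc; exact h), Or.inl h, Or.inr rfl⟩
  have hnp' : ∀ x y y' : G, adj y y' → NPadj i adj adj (x, y) (x, y') := by
    intro x y y' h
    rcases hi with rfl | rfl
    · exact Or.inl ⟨rfl, h⟩
    · refine ⟨fun hc => hirr y (by cases hc; exact h), Or.inr rfl, Or.inl h⟩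
  have stepL : ∀ x x' y : G, adj x x' → Relation.ReflTransGen adj (x * y) (x' * y) := by
    intro x x' y h
    rcases hmul (x, y) (x', y) (hnp x x' y h) with h' | h'
    · exact Relation.ReflTransGen.single h'
    · simp only [] at h'; exact h' ▸ Relation.ReflTransGen.refl
  have stepR : ∀ x y y' : G, adj y y' → Relation.ReflTransGen adj (x * y) (x * y') := by
    intro x y y' h
    rcases hmul (x, y) (x, y') (hnp' x y y' h) with h' | h'
    · exact Relation.ReflTransGen.single h'
    · simp only [] at h'; exact h' ▸ Relation.ReflTransGen.refl
  have mulcong : ∀ x x' y y' : G, Relation.ReflTransGen adj x x' →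
      Relation.ReflTransGen adj y y' → Relation.ReflTransGen adj (x * y) (x' * y') := by
    intro x x' y y' hx hy
    have h1 : Relation.ReflTransGen adj (x * y) (x' * y) := by
      induction hx with
      | refl => exact Relation.ReflTransGen.refl
      | tail _ h ih => exact ih.trans (stepL _ _ _ h)
    have h2 : Relation.ReflTransGen adj (x' * y) (x' * y') := by
      induction hy with
      | refl => exact Relation.ReflTransGen.refl
      | tail _ h ih => exact ih.trans (stepR _ _ _ h)
    exact h1.trans h2
  have invcong : ∀ x x' : G, Relation.ReflTransGen adj x x' →
      Relation.ReflTransGen adj x⁻¹ x'⁻¹ := by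
    intro x x' hx
    induction hx with
    | refl => exact Relation.ReflTransGen.refl
    | tail _ h ih =>
      rcases hinv _ _ h with h' | h'
      · exact ih.trans (Relation.ReflTransGen.single h')
      · simp only [] at h'; exact ih.trans (h' ▸ Relation.ReflTransGen.refl)
  refine ⟨mulcong, invcong, ?_⟩
  set R := Relation.ReflTransGen adj with hR
  let m : Quot R → Quot R → Quot R :=
    Quot.lift (fun x => Quot.lift (fun y => Quot.mk R (x * y))
        (fun y y' h => Quot.sound (mulcong x x y y' Relation.ReflTransGen.refl h)))
      (fun x x' h => by
        funext q
        induction q using Quot.ind with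
        | mk y => exact Quot.sound (mulcong x x' y y h Relation.ReflTransGen.refl))
  let inv : Quot R → Quot R :=
    Quot.lift (fun x => Quot.mk R x⁻¹) (fun x x' h => Quot.sound (invcong x x' h))
  have hm : ∀ x y : G, m (Quot.mk R x) (Quot.mk R y) = Quot.mk R (x * y) := fun _ _ => rfl
  have hiv : ∀ x : G, inv (Quot.mk R x) = Quot.mk R x⁻¹ := fun _ => rfl
  refine ⟨m, inv, Quot.mk R 1, ?_, ?_, ?_, ?_, hm, hiv⟩
  · intro a b c
    induction a using Quot.ind with | mk x =>
    induction b using Quot.ind with | mk y =>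
    induction c using Quot.ind with | mk z =>
    simp only [hm, mul_assoc]
  · intro a
    induction a using Quot.ind with | mk x =>
    simp only [hm, one_mul]
  · intro a
    induction a using Quot.ind with | mk x =>
    simp only [hm, mul_one]
  · intro a
    induction a using Quot.ind with | mk x =>
    simp only [hiv, hm, inv_mul_cancel]
end

section
/- Fix i ∈ {1,2}, let (G,κ) be an NP_i-digital topological group, and let N be a normal subgroup of G. Equip the quotient group G/N with the quotient adjacency κ̄: two distinct cosets x̄ and ȳ are κ̄-adjacent iff there exist representatives x ∈ x̄ and y ∈ ȳ with x κ-adjacent to y. Then (G/N, κ̄) is an NP_i-digital topological group: the quotient multiplication μ(x̄,ȳ) = (xy)‾ is continuous from the NP_i(κ̄,κ̄) adjacency to κ̄, and the quotient inversion x̄ ↦ (x⁻¹)‾ is continuous. -/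
/-- The quotient of an NP_i-digital topological group by a normal subgroup,
with the quotient adjacency, is an NP_i-digital topological group. -/
theorem stmt13 {G : Type*} [Group G] [Fintype G]
    (i : ℕ) (hi : i ∈ ({1, 2} : Set ℕ))
    (κ : G → G → Prop) (hG : IsNPiDTG i κ)
    (N : Subgroup G) [N.Normal] :
    IsNPiDTG i (fun a b : G ⧸ N => a ≠ b ∧
      ∃ x y : G, (QuotientGroup.mk x : G ⧸ N) = a ∧ QuotientGroup.mk y = b ∧ κ x y) := by
  obtain ⟨hirr, hsym, hmul, hinv⟩ := hG
  -- helper: representatives for adj'-or-equal pairs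
  have hrep : ∀ a b : G ⧸ N, ((a ≠ b ∧
      ∃ x y : G, (QuotientGroup.mk x : G ⧸ N) = a ∧ QuotientGroup.mk y = b ∧ κ x y) ∨ a = b) →
      ∃ x y : G, (QuotientGroup.mk x : G ⧸ N) = a ∧ QuotientGroup.mk y = b ∧ (κ x y ∨ x = y) := by
    rintro a b (⟨_, x, y, hx, hy, hxy⟩ | rfl)
    · exact ⟨x, y, hx, hy, Or.inl hxy⟩
    · obtain ⟨x, rfl⟩ := QuotientGroup.mk_surjective a
      exact ⟨x, x, rfl, rfl, Or.inr rfl⟩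
  refine ⟨fun a ha => ha.1 rfl, fun a b hab => ⟨hab.1.symm, ?_⟩, ?_, ?_⟩
  · obtain ⟨_, x, y, hx, hy, hxy⟩ := hab
    exact ⟨y, x, hy, hx, hsym hxy⟩
  · -- multiplication
    rintro ⟨a, b⟩ ⟨c, d⟩ h
    by_cases heq : a * b = c * d
    · exact Or.inr heq
    · simp only [Set.mem_insert_iff, Set.mem_singleton_iff] at hi
      -- extract reps with κ-or-eq in each coordinate, and NPadj in G×G
      have key : ∃ x y x' y' : G, (QuotientGroup.mk x : G ⧸ N) = a ∧
          (QuotientGroup.mk y : G ⧸ N) = b ∧ (QuotientGroup.mk x' : G ⧸ N) = c ∧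
          (QuotientGroup.mk y' : G ⧸ N) = d ∧ NPadj i κ κ (x, y) (x', y') := by
        rcases hi with rfl | rfl
        · simp only [NPadj, if_pos rfl, NP1adj] at h ⊢
          rcases h with ⟨hac, hbd⟩ | ⟨hac, hbd⟩
          · obtain ⟨y, y', hy, hy', hyy'⟩ := hbd.2
            obtain ⟨x, rfl⟩ := QuotientGroup.mk_surjective a
            exact ⟨x, y, x, y', rfl, hy, hac, hy', Or.inl ⟨rfl, hyy'⟩⟩
          · obtain ⟨x, x', hx, hx', hxx'⟩ := hac.2
            obtain ⟨y, rfl⟩ := QuotientGroup.mk_surjective b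
            exact ⟨x, y, x', y, hx, rfl, hx', hbd, Or.inr ⟨hxx', rfl⟩⟩
        · simp only [NPadj, NP2adj] at h ⊢
          obtain ⟨hne, hac, hbd⟩ := h
          obtain ⟨x, x', hx, hx', hxx'⟩ := hrep a c (hac.imp id id)
          obtain ⟨y, y', hy, hy', hyy'⟩ := hrep b d (hbd.imp id id)
          refine ⟨x, y, x', y', hx, hy, hx', hy', ?_, hxx', hyy'⟩
          intro hpq
          apply heq
          have h1 : x = x' := congrArg Prod.fst hpq
          have h2 : y = y' := congrArg Prod.snd hpq
          rw [← hx, ← hy, ← hx', ← hy', h1, h2]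
      obtain ⟨x, y, x', y', hx, hy, hx', hy', hnp⟩ := key
      rcases hmul (x, y) (x', y') hnp with hk | hk
      · refine Or.inl ⟨heq, x * y, x' * y', ?_, ?_, hk⟩
        · rw [QuotientGroup.mk_mul, hx, hy]
        · rw [QuotientGroup.mk_mul, hx', hy']
      · exfalso; apply heq
        have hk' : x * y = x' * y' := hk
        rw [← hx, ← hy, ← hx', ← hy', ← QuotientGroup.mk_mul, ← QuotientGroup.mk_mul, hk']
  · -- inversion
    rintro a b ⟨hne, x, y, hx, hy, hxy⟩
    by_cases heq : a⁻¹ = b⁻¹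
    · exact Or.inr heq
    · rcases hinv x y hxy with hk | hk
      · refine Or.inl ⟨heq, x⁻¹, y⁻¹, ?_, ?_, hk⟩
        · rw [QuotientGroup.mk_inv, hx]
        · rw [QuotientGroup.mk_inv, hy]
      · exfalso; apply heq
        have hk' : x⁻¹ = y⁻¹ := hk
        rw [← hx, ← hy, ← QuotientGroup.mk_inv, ← QuotientGroup.mk_inv, hk']
end

section
/- Let f : (G,κ) → (H,λ) be a digital topological group homomorphism (a group homomorphism that is digitally continuous) between digital topological groups, with kernel K, and assume f is a digital open map: whenever z, w ∈ f(G) with z λ-adjacent to w, there exist a ∈ f⁻¹(z) and b ∈ f⁻¹(w) with a ⟷= b under κ. Then the canonical group isomorphism F : G/K → Im f (determined by F(xK) = f(x)) is a digital isomorphism from (G/K, κ̄) (with the quotient adjacency κ̄) onto Im f with the adjacency restricted from λ; that is, F is a bijective group homomorphism with both F and F⁻¹ digitally continuous. -/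
/-- First isomorphism theorem for digital topological groups: if f is a
digitally continuous, digitally open group homomorphism, the canonical group isomorphism
F : G/ker f ≅ Im f is a digital isomorphism (F and F⁻¹ digitally continuous). -/
theorem stmt14 {G H : Type*} [Group G] [Group H] [Fintype G] [Fintype H]
    (κ : G → G → Prop) (lam : H → H → Prop)
    (hG : IsDTG κ) (hH : IsDTG lam)
    (f : G →* H) (hf : DigCont κ lam ⇑f)
    (hopen : ∀ z w : H, z ∈ Set.range ⇑f → w ∈ Set.range ⇑f → lam z w →
      ∃ a b : G, f a = z ∧ f b = w ∧ (κ a b ∨ a = b)) :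
    ∃ F : (G ⧸ f.ker) ≃* f.range,
      (∀ x : G, (F (QuotientGroup.mk x) : H) = f x) ∧
      DigCont
        (fun a b : G ⧸ f.ker => a ≠ b ∧
          ∃ x y : G, (QuotientGroup.mk x : G ⧸ f.ker) = a ∧ QuotientGroup.mk y = b ∧ κ x y)
        (fun a b : f.range => lam a.val b.val) ⇑F ∧
      DigCont (fun a b : f.range => lam a.val b.val)
        (fun a b : G ⧸ f.ker => a ≠ b ∧
          ∃ x y : G, (QuotientGroup.mk x : G ⧸ f.ker) = a ∧ QuotientGroup.mk y = b ∧ κ x y)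
        ⇑F.symm := by
  refine ⟨QuotientGroup.quotientKerEquivRange f, ?_, ?_, ?_⟩
  · intro x
    rfl
  · rintro a b ⟨hne, x, y, hx, hy, hxy⟩
    subst hx; subst hy
    rcases hf x y hxy with h | h
    · left; exact h
    · exact absurd (QuotientGroup.eq_iff_div_mem.mpr (by
        simp [MonoidHom.mem_ker, h])) hne
  · intro z w hzw
    obtain ⟨a, b, ha, hb, hab⟩ := hopen z.val w.val
      (by obtain ⟨u, hu⟩ := z.2; exact ⟨u, hu⟩)
      (by obtain ⟨u, hu⟩ := w.2; exact ⟨u, hu⟩) hzw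
    have hz : (QuotientGroup.quotientKerEquivRange f).symm z = QuotientGroup.mk a := by
      apply (QuotientGroup.quotientKerEquivRange f).injective
      simp only [MulEquiv.apply_symm_apply]
      exact Subtype.ext ha.symm
    have hw : (QuotientGroup.quotientKerEquivRange f).symm w = QuotientGroup.mk b := by
      apply (QuotientGroup.quotientKerEquivRange f).injective
      simp only [MulEquiv.apply_symm_apply]
      exact Subtype.ext hb.symm
    rcases hab with hk | heq
    · by_cases hmk : (QuotientGroup.mk a : G ⧸ f.ker) = QuotientGroup.mk b
      · right; rw [hz, hw, hmk]
      · left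
        refine ⟨?_, a, b, hz.symm, hw.symm, hk⟩
        rw [hz, hw]; exact hmk
    · right; rw [hz, hw, heq]
end

section
/- Let G and H be digital topological groups with identity elements e_G and e_H respectively, and let f : G → H be a group homomorphism satisfying: for every x ∈ G with x adjacent to e_G, f(x) is adjacent or equal to e_H. Then f is digitally continuous (hence a digital topological group homomorphism). -/
/-- In a digital topological group, right translation preserves adjacency. -/
lemma rightTransAdj {G : Type*} [Group G] {adj : G → G → Prop} (hG : IsDTG adj)
    {x y : G} (a : G) (hxy : adj x y) : adj (x * a) (y * a) := by
  obtain ⟨i, _, hirr, _, hmul, _⟩ := hG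
  have hne : x ≠ y := fun hxy' => hirr x (hxy' ▸ hxy)
  have hadj : NPadj i adj adj (x, a) (y, a) := by
    unfold NPadj
    split
    · exact Or.inr ⟨hxy, rfl⟩
    · exact ⟨fun hc => hne (congrArg Prod.fst hc), Or.inl hxy, Or.inr rfl⟩
  rcases hmul (x, a) (y, a) hadj with h | h
  · exact h
  · exact absurd (mul_right_cancel h) hne

/-- A group homomorphism of digital topological groups which is continuous
at the identity is digitally continuous. -/
theorem stmt15 {G H : Type*} [Group G] [Group H] [Fintype G] [Fintype H]
    (adjG : G → G → Prop) (adjH : H → H → Prop)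
    (hG : IsDTG adjG) (hH : IsDTG adjH)
    (f : G →* H)
    (h : ∀ x : G, adjG x 1 → adjH (f x) 1 ∨ f x = 1) :
    DigCont adjG adjH ⇑f := by
  intro x y hxy
  have h1 : adjG (x * y⁻¹) 1 := by
    have := rightTransAdj hG y⁻¹ hxy
    rwa [mul_inv_cancel] at this
  rcases h _ h1 with h2 | h2
  · left
    have := rightTransAdj hH (f y) h2
    rwa [map_mul, map_inv, inv_mul_cancel_right, one_mul] at this
  · right
    rw [map_mul, map_inv] at h2
    exact mul_inv_eq_one.mp h2
end

section
/- Let G be an NP₂-digital topological group whose graph (G,~) is connected. Then every element of G is adjacent or equal to the identity element e, i.e., for all x ∈ G, x ⟷= e. -/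
/-- In a connected NP₂-digital topological group, every element is adjacent
or equal to the identity. -/
theorem stmt16 {G : Type*} [Group G] [Fintype G] (adj : G → G → Prop)
    (hG : IsNPiDTG 2 adj)
    (hconn : ∀ x y : G, Relation.ReflTransGen adj x y) :
    ∀ x : G, adj x 1 ∨ x = 1 := by
  obtain ⟨hirr, hsym, hmul, hinv⟩ := hG
  have hmul2 : DigCont (NP2adj adj adj) adj (fun p : G × G => p.1 * p.2) := by
    simpa [NPadj] using hmul
  -- key step: if x ⟷= 1 and y ~ x then y ⟷= 1
  have step : ∀ x y : G, (adj x 1 ∨ x = 1) → adj y x → (adj y 1 ∨ y = 1) := by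
    intro x y hx hyx
    rcases hx with hx | rfl
    · -- first: y * x⁻¹ ⟷= 1
      have hne : y ≠ x := by
        rintro rfl; exact hirr y hyx
      have h1 : adj (y * x⁻¹) 1 ∨ y * x⁻¹ = 1 := by
        have := hmul2 (y, x⁻¹) (x, x⁻¹)
          ⟨by simp [Prod.ext_iff, hne], Or.inl hyx, Or.inr rfl⟩
        simpa using this
      -- now combine with x ⟷= 1
      by_cases hx1 : y * x⁻¹ = 1 ∧ x = 1
      · exact absurd hx1.2 (by rintro rfl; exact hirr 1 hx)
      · have hne2 : ((y * x⁻¹, x) : G × G) ≠ (1, 1) := by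
          simpa [Prod.ext_iff] using hx1
        have := hmul2 (y * x⁻¹, x) (1, 1) ⟨hne2, h1, Or.inl hx⟩
        simpa using this
    · left; simpa using hyx
  intro x
  induction hconn 1 x with
  | refl => exact Or.inr rfl
  | tail _ hbc ih => exact step _ _ ih (hsym hbc)
end

section
/- Let G be an NP₂-digital topological group whose graph (G,~) is connected. Then (G,~) is a complete graph: any two distinct elements of G are adjacent. -/
/-- A connected NP₂-digital topological group is a complete graph. -/
theorem stmt17 {G : Type*} [Group G] [Fintype G] (adj : G → G → Prop)
    (hG : IsNPiDTG 2 adj)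
    (hconn : ∀ x y : G, Relation.ReflTransGen adj x y) :
    ∀ x y : G, x ≠ y → adj x y := by
  obtain ⟨hirr, hsym, hmul, hinv⟩ := hG
  simp only [NPadj, if_neg (by norm_num : (2:ℕ) ≠ 1)] at hmul
  have hne : ∀ a b : G, adj a b → a ≠ b := by
    rintro a b h rfl; exact hirr a h
  -- quasi-transitivity
  have htr : ∀ a b c : G, adj a b → adj b c → a ≠ c → adj a c := by
    intro a b c hab hbc hac
    have h1 : adj (a * b⁻¹) 1 := by
      have := hmul (a, b⁻¹) (b, b⁻¹) ⟨by simp [Prod.ext_iff, hne a b hab],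
        Or.inl hab, Or.inr rfl⟩
      simp only [mul_inv_cancel] at this
      rcases this with h | h
      · exact h
      · exact absurd (by simpa using mul_right_cancel (h.trans (mul_inv_cancel b).symm))
          (hne a b hab)
    have := hmul (a * b⁻¹, b) (1, c) ⟨by simp [Prod.ext_iff, hne b c hbc],
      Or.inl h1, Or.inl hbc⟩
    simp only [inv_mul_cancel_right, one_mul] at this
    rcases this with h | h
    · exact h
    · exact absurd h hac
  intro x y hxy
  have : ∀ x y : G, Relation.ReflTransGen adj x y → x ≠ y → adj x y := by
    intro x y h
    induction h with
    | refl => intro h; exact absurd rfl h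
    | tail hxb hbc ih =>
      intro hne'
      rename_i b c
      by_cases hxb' : x = b
      · exact hxb' ▸ hbc
      · exact htr x b c (ih hxb') hbc hne'
  exact this x y (hconn x y) hxy
end

section
/- Let G be an NP₂-digital topological group. Then the graph (G,~) is a regular cluster graph: every connected component of (G,~) induces a complete graph (i.e., whenever x and y are joined by a path of adjacent vertices, x ⟷= y), and (G,~) is regular (all vertices have the same degree). -/
/-- An NP₂-digital topological group is a regular cluster graph: every
component induces a complete graph, and all vertices have the same degree. -/
theorem stmt18 {G : Type*} [Group G] [Fintype G] (adj : G → G → Prop)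
    (hG : IsNPiDTG 2 adj) :
    (∀ x y : G, Relation.ReflTransGen adj x y → adj x y ∨ x = y) ∧
    ∃ d : ℕ, ∀ x : G, {y | adj x y}.ncard = d := by
  obtain ⟨hirr, hsym, hmul, hinv⟩ := hG
  have hmul' : DigCont (NP2adj adj adj) adj (fun p : G × G => p.1 * p.2) := by
    simpa [NPadj] using hmul
  -- left translation preserves adjacency
  have htrans : ∀ g x y : G, adj x y → adj (g * x) (g * y) := by
    intro g x y h
    have hne : x ≠ y := fun e => hirr y (e ▸ h)
    have h2 := hmul' (g, x) (g, y)
      ⟨fun e => hne (congrArg Prod.snd e), Or.inr rfl, Or.inl h⟩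
    rcases h2 with h' | h'
    · exact h'
    · exact absurd (mul_left_cancel h') hne
  -- key transitivity
  have htriv : ∀ x y z : G, adj x y → adj y z → adj x z ∨ x = z := by
    intro x y z hxy hyz
    have h1 : adj (1 : G) (y⁻¹ * z) := by
      have := htrans y⁻¹ y z hyz; simpa using this
    have hxy' : x ≠ y := fun e => hirr y (e ▸ hxy)
    have h2 := hmul' (x, 1) (y, y⁻¹ * z)
      ⟨fun e => hxy' (congrArg Prod.fst e), Or.inl hxy, Or.inl h1⟩
    rcases h2 with h | h
    · left; simpa using h
    · right; simpa using h
  constructor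
  · intro x y h
    induction h with
    | refl => right; rfl
    | tail _ hbc ih =>
      rcases ih with h | h
      · exact htriv _ _ _ h hbc
      · left; exact h ▸ hbc
  · refine ⟨{y | adj 1 y}.ncard, fun x => ?_⟩
    have himg : {y | adj x y} = (fun y => x * y) '' {y | adj 1 y} := by
      ext y
      constructor
      · intro hy
        refine ⟨x⁻¹ * y, ?_, by group⟩
        have := htrans x⁻¹ x y hy; simpa using this
      · rintro ⟨z, hz, rfl⟩
        have := htrans x 1 z hz; simpa using this
    rw [himg, Set.ncard_image_of_injective _ (mul_right_injective x)]
end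

section
/- Let (X,~) be a nonempty finite graph that is a regular cluster graph: every connected component of (X,~) induces a complete graph, and all vertices have the same degree (equivalently, X is a disjoint union of complete graphs all of the same size). Then there exist a group structure on X (a multiplication μ_X : X × X → X and inverse ι_X : X → X satisfying the group axioms) such that μ_X is continuous from the NP₂ adjacency to ~ and ι_X is digitally continuous; that is, (X,~) can be made into an NP₂-digital topological group. -/
/-- Any nonempty regular cluster graph admits a group structure making it
an NP₂-digital topological group. -/
theorem stmt19 {X : Type*} [Fintype X] [Nonempty X] (adj : X → X → Prop)
    (hirr : Irreflexive adj) (hsym : Symmetric adj)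
    (hcluster : ∀ x y : X, Relation.ReflTransGen adj x y → adj x y ∨ x = y)
    (hreg : ∃ d : ℕ, ∀ x : X, {y | adj x y}.ncard = d) :
    ∃ (m : X → X → X) (inv : X → X) (e : X),
      (∀ a b c : X, m (m a b) c = m a (m b c)) ∧
      (∀ a : X, m e a = a) ∧ (∀ a : X, m a e = a) ∧
      (∀ a : X, m (inv a) a = e) ∧
      DigCont (NPadj 2 adj adj) adj (fun p : X × X => m p.1 p.2) ∧
      DigCont adj adj inv := by
    classical
  obtain ⟨d, hd⟩ := hreg
  set r : X → X → Prop := fun x y => x = y ∨ adj x y with hr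
  have hr_rtg : ∀ {x y}, r x y → Relation.ReflTransGen adj x y := by
    rintro x y (rfl | h)
    · exact .refl
    · exact .single h
  have hr_refl : ∀ x, r x x := fun x => Or.inl rfl
  have hr_symm : ∀ {x y}, r x y → r y x := by
    rintro x y (rfl | h)
    · exact Or.inl rfl
    · exact Or.inr (hsym h)
  have hr_trans : ∀ {x y z}, r x y → r y z → r x z := by
    intro x y z hxy hyz
    rcases hcluster x z ((hr_rtg hxy).trans (hr_rtg hyz)) with h | h
    · exact Or.inr h
    · exact Or.inl h
  let s : Setoid X := ⟨r, hr_refl, fun h => hr_symm h, fun h h' => hr_trans h h'⟩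
  have hadj : ∀ x y, adj x y ↔ (r x y ∧ x ≠ y) := by
    intro x y
    constructor
    · intro h
      refine ⟨Or.inr h, ?_⟩
      rintro rfl
      exact hirr x h
    · rintro ⟨(rfl | h), hne⟩
      · exact absurd rfl hne
      · exact h
  -- fibers of the quotient map have cardinality d+1
  have hfibcard : ∀ q : Quotient s, Fintype.card {x // Quotient.mk s x = q} = d + 1 := by
    intro q
    obtain ⟨x₀, rfl⟩ := q.exists_rep
    have hset : {y : X | Quotient.mk s y = Quotient.mk s x₀} = insert x₀ {y | adj x₀ y} := by
      ext y
      simp only [Set.mem_setOf_eq, Set.mem_insert_iff, Quotient.eq]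
      show r y x₀ ↔ _
      constructor
      · rintro (rfl | h)
        · exact Or.inl rfl
        · exact Or.inr (hsym h)
      · rintro (rfl | h)
        · exact Or.inl rfl
        · exact Or.inr (hsym h)
    have h1 : Nat.card {x // Quotient.mk s x = Quotient.mk s x₀}
        = ({y : X | Quotient.mk s y = Quotient.mk s x₀}).ncard :=
      Nat.card_coe_set_eq _
    have h2 : ({y : X | Quotient.mk s y = Quotient.mk s x₀}).ncard = d + 1 := by
      rw [hset, Set.ncard_insert_of_notMem (by simp [hirr x₀]) (Set.toFinite _), hd x₀]
    rw [← Nat.card_eq_fintype_card, h1, h2]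
  haveI : NeZero (d + 1) := ⟨Nat.succ_ne_zero d⟩
  let fibEquiv : ∀ q : Quotient s, {x // Quotient.mk s x = q} ≃ ZMod (d + 1) := fun q =>
    Fintype.equivOfCardEq (by rw [hfibcard q, ZMod.card])
  haveI : Nonempty (Quotient s) := ⟨Quotient.mk s (Classical.arbitrary X)⟩
  set M := Fintype.card (Quotient s) with hM
  haveI : NeZero M := ⟨Fintype.card_ne_zero⟩
  let eqQ : Quotient s ≃ ZMod M := Fintype.equivOfCardEq (by rw [ZMod.card])
  let E : X ≃ ZMod M × ZMod (d + 1) :=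
    ((Equiv.sigmaFiberEquiv (Quotient.mk s)).symm.trans
      ((Equiv.sigmaCongrRight fibEquiv).trans (Equiv.sigmaEquivProd _ _))).trans
      (Equiv.prodCongr eqQ (Equiv.refl _))
  have hE1 : ∀ x : X, (E x).1 = eqQ (Quotient.mk s x) := fun x => rfl
  have hkey : ∀ x y : X, (E x).1 = (E y).1 ↔ r x y := by
    intro x y
    rw [hE1, hE1, eqQ.apply_eq_iff_eq, Quotient.eq]
    exact Iff.rfl
  refine ⟨fun a b => E.symm (E a + E b), fun a => E.symm (-(E a)), E.symm 0, ?_, ?_, ?_, ?_, ?_, ?_⟩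
  · intro a b c; simp [add_assoc]
  · intro a; simp
  · intro a; simp
  · intro a; simp
  · rintro ⟨a, b⟩ ⟨a', b'⟩ hN
    have hN' : NP2adj adj adj (a, b) (a', b') := by
      simpa [NPadj] using hN
    obtain ⟨-, h1, h2⟩ := hN'
    have ha : (E a).1 = (E a').1 := by
      rcases h1 with h | h
      · exact (hkey a a').2 ((hadj a a').1 h).1
      · rw [show a = a' from h]
    have hb : (E b).1 = (E b').1 := by
      rcases h2 with h | h
      · exact (hkey b b').2 ((hadj b b').1 h).1
      · rw [show b = b' from h]
    simp only
    by_cases heq : E.symm (E a + E b) = E.symm (E a' + E b')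
    · exact Or.inr heq
    · refine Or.inl ((hadj _ _).2 ⟨(hkey _ _).1 ?_, heq⟩)
      simp only [Equiv.apply_symm_apply, Prod.fst_add, ha, hb]
  · intro x y hxy
    have h := (hkey x y).2 ((hadj x y).1 hxy).1
    by_cases heq : E.symm (-(E x)) = E.symm (-(E y))
    · exact Or.inr heq
    · refine Or.inl ((hadj _ _).2 ⟨(hkey _ _).1 ?_, heq⟩)
      simp only [Equiv.apply_symm_apply, Prod.fst_neg, h]
end
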